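/- (Main general theorem) Let g : ℂ → ℂ be analytic on ℂ except at a finite set F of singular points with F ∩ [−1, 1] = ∅ (so g is continuous on [−1, 1]), and let h : ℂ → ℂ and C₁ > 0 satisfy |h(z)| ≥ C₁·|√(1 − z²)| for all z in ψ(D_{d₀}) for every d₀ ∈ (0, π/2), with f = g/h analytic where defined. Then there exist d ∈ (0, π/2) and a constant C₂ > 0 such that g is analytic and bounded by C₂ on the closure of ψ(D_d), and consequently |f(z)| = |g(z)|/|h(z)| ≤ (C₂/C₁)·|1/√(1 − z²)| for all z ∈ ψ(D_d); i.e., f satisfies the hypotheses of the tanh-sinh convergence theorem with β = 1. -/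

import Mathlib

open Real Complex

/-- The tanh-sinh change of variables `ψ(z) = tanh((π/2)·sinh z)`. -/
noncomputable def tsPsi (z : ℂ) : ℂ := Complex.tanh ((π / 2 : ℂ) * Complex.sinh z)

/-- The open horizontal strip `D_d = {z : |Im z| < d}`. -/
def tsStrip (d : ℝ) : Set ℂ := {z : ℂ | |z.im| < d}

/-! Write `w = (π/2)·sinh z = u + iv`. Then `tanh w - tanh u = i·sin v / (cosh w · cosh u)`, and on a
thin strip `|Im z| < d` either `|Re z|` is bounded, so that `v` is small and `|cosh w| ≥ cosh u · cos v`
is bounded below, or `|Re z|` is large, so that `|u|` is large and `|cosh w| ≥ sinh |u|` is huge.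
Hence `ψ(D_d)` lies in any prescribed closed thickening of `[-1, 1]`. A thin enough one is compact and
avoids `F`, so `g` is analytic and bounded on it, and the bound on `g / h` follows from the lower bound
on `h`, since `1 - tanh² w = 1 / cosh² w` never vanishes. -/

namespace Complex

theorem sinh_re (z : ℂ) : (sinh z).re = Real.sinh z.re * Real.cos z.im := by
  obtain ⟨x, y, rfl⟩ : ∃ x y : ℝ, z = x + y * I := ⟨z.re, z.im, (re_add_im z).symm⟩
  simp [sinh_add, sinh_mul_I, cosh_mul_I, ← ofReal_sinh, ← ofReal_cosh, ← ofReal_sin, ← ofReal_cos]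

theorem sinh_im (z : ℂ) : (sinh z).im = Real.cosh z.re * Real.sin z.im := by
  obtain ⟨x, y, rfl⟩ : ∃ x y : ℝ, z = x + y * I := ⟨z.re, z.im, (re_add_im z).symm⟩
  simp [sinh_add, sinh_mul_I, cosh_mul_I, ← ofReal_sinh, ← ofReal_cosh, ← ofReal_sin, ← ofReal_cos]

theorem cosh_re (z : ℂ) : (cosh z).re = Real.cosh z.re * Real.cos z.im := by
  obtain ⟨x, y, rfl⟩ : ∃ x y : ℝ, z = x + y * I := ⟨z.re, z.im, (re_add_im z).symm⟩
  simp [cosh_add, sinh_mul_I, cosh_mul_I, ← ofReal_sinh, ← ofReal_cosh, ← ofReal_sin, ← ofReal_cos]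

theorem sinh_abs_re_le_norm_cosh (w : ℂ) : Real.sinh |w.re| ≤ ‖cosh w‖ := by
  have h := abs_norm_sub_norm_le (exp w) (-exp (-w))
  rw [norm_neg, norm_exp, norm_exp, neg_re, sub_neg_eq_add] at h
  rw [← Real.abs_sinh, Real.sinh_eq, cosh, norm_div, abs_div, Complex.norm_two, abs_two]
  gcongr

theorem norm_tanh_sub_tanh_re {w : ℂ} (hw : cosh w ≠ 0) :
    ‖tanh w - tanh w.re‖ = |Real.sin w.im| / (‖cosh w‖ * Real.cosh w.re) := by
  have hu : cosh (w.re : ℂ) ≠ 0 := by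
    rw [← ofReal_cosh]; exact_mod_cast (Real.cosh_pos _).ne'
  have hdiff : w - w.re = w.im * I := by
    nth_rewrite 1 [← re_add_im w]
    ring
  rw [tanh_eq_sinh_div_cosh, tanh_eq_sinh_div_cosh, div_sub_div _ _ hw hu, ← sinh_sub, hdiff,
    sinh_mul_I, norm_div, norm_mul, norm_mul, norm_I, mul_one, ← ofReal_sin, ← ofReal_cosh,
    norm_real, norm_real, Real.norm_eq_abs, Real.norm_eq_abs, abs_of_pos (Real.cosh_pos _)]

theorem norm_tanh_sub_tanh_re_le_of_abs_im_le_one {w : ℂ} (hv : |w.im| ≤ 1) :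
    ‖tanh w - tanh w.re‖ ≤ 2 * |w.im| := by
  have hcos : 1 / 2 ≤ Real.cos w.im := by
    nlinarith [Real.one_sub_sq_div_two_le_cos (x := w.im), sq_abs w.im, abs_nonneg w.im]
  have hcosh : 1 / 2 ≤ ‖cosh w‖ * Real.cosh w.re := by
    have hre := (cosh_re w).symm.trans_le (re_le_norm (cosh w))
    have h1 : 1 / 2 ≤ ‖cosh w‖ := by nlinarith [Real.one_le_cosh w.re]
    nlinarith [Real.one_le_cosh w.re]
  have hw : cosh w ≠ 0 := by
    rintro h0
    rw [h0, norm_zero, zero_mul] at hcosh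
    norm_num at hcosh
  rw [norm_tanh_sub_tanh_re hw]
  calc |Real.sin w.im| / (‖cosh w‖ * Real.cosh w.re) ≤ |w.im| / (1 / 2) :=
        div_le_div₀ (abs_nonneg _) Real.abs_sin_le_abs (by norm_num) hcosh
    _ = 2 * |w.im| := by ring

theorem norm_tanh_sub_tanh_re_le_of_re_ne_zero {w : ℂ} (hu : w.re ≠ 0) :
    ‖tanh w - tanh w.re‖ ≤ 1 / Real.sinh |w.re| := by
  have hs : 0 < Real.sinh |w.re| := Real.sinh_pos_iff.2 (abs_pos.2 hu)
  have hcosh : Real.sinh |w.re| ≤ ‖cosh w‖ * Real.cosh w.re := by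
    nlinarith [sinh_abs_re_le_norm_cosh w, Real.one_le_cosh w.re]
  have hw : cosh w ≠ 0 := by
    rintro h0
    have := sinh_abs_re_le_norm_cosh w
    rw [h0, norm_zero] at this
    linarith
  rw [norm_tanh_sub_tanh_re hw]
  gcongr
  exact Real.abs_sin_le_one _

-- At the poles of `tanh` this holds only through the junk value `tanh w = 0`.
theorem one_sub_tanh_sq_ne_zero (w : ℂ) : 1 - tanh w ^ 2 ≠ 0 := by
  by_cases hw : cosh w = 0
  · simp [tanh_eq_sinh_div_cosh, hw]
  · rw [tanh_eq_sinh_div_cosh, div_pow, one_sub_div (pow_ne_zero 2 hw), cosh_sq_sub_sinh_sq]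
    exact div_ne_zero one_ne_zero (pow_ne_zero 2 hw)

end Complex

theorem norm_div_le_div_mul_norm_one_div {𝕜 : Type*} [NormedDivisionRing 𝕜] {a b s : 𝕜}
    {C₁ C₂ : ℝ} (hC₁ : 0 < C₁) (hC₂ : 0 ≤ C₂) (hs : s ≠ 0) (ha : ‖a‖ ≤ C₂)
    (hb : C₁ * ‖s‖ ≤ ‖b‖) : ‖a / b‖ ≤ C₂ / C₁ * ‖1 / s‖ := by
  have hCs : 0 < C₁ * ‖s‖ := mul_pos hC₁ (norm_pos_iff.2 hs)
  rw [norm_div, norm_div, norm_one, div_mul_div_comm, mul_one]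
  exact div_le_div₀ hC₂ ha hCs hb

theorem abs_im_pi_div_two_mul_sinh_le {z : ℂ} {R : ℝ} (hx : |z.re| ≤ R) :
    |((π / 2 : ℂ) * Complex.sinh z).im| ≤ 2 * Real.cosh R * |z.im| := by
  have hcosh : Real.cosh z.re ≤ Real.cosh R := Real.cosh_le_cosh.2 (hx.trans (le_abs_self R))
  have him : ((π / 2 : ℂ) * Complex.sinh z).im = π / 2 * Real.cosh z.re * Real.sin z.im := by
    simp [Complex.sinh_im, mul_assoc]
  rw [him, abs_mul, abs_mul, abs_of_pos (Real.cosh_pos _), abs_of_pos (by positivity : 0 < π / 2)]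
  exact mul_le_mul (mul_le_mul (by linarith [Real.pi_lt_four]) hcosh (Real.cosh_pos _).le
    (by norm_num)) Real.abs_sin_le_abs (abs_nonneg _) (by positivity)

theorem sinh_abs_re_div_two_le_abs_re_pi_div_two_mul_sinh {z : ℂ} (hy : |z.im| ≤ 1) :
    Real.sinh |z.re| / 2 ≤ |((π / 2 : ℂ) * Complex.sinh z).re| := by
  have hcos : 1 / 2 ≤ Real.cos z.im := by
    nlinarith [Real.one_sub_sq_div_two_le_cos (x := z.im), sq_abs z.im, abs_nonneg z.im]
  have hsinh : 0 ≤ Real.sinh |z.re| := Real.sinh_nonneg_iff.2 (abs_nonneg _)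
  have hre : ((π / 2 : ℂ) * Complex.sinh z).re = π / 2 * Real.sinh z.re * Real.cos z.im := by
    simp [Complex.sinh_re, mul_assoc]
  rw [hre, abs_mul, abs_mul, abs_of_pos (by positivity : 0 < π / 2), Real.abs_sinh,
    abs_of_pos (by linarith : 0 < Real.cos z.im)]
  have hsc : Real.sinh |z.re| / 2 ≤ Real.sinh |z.re| * Real.cos z.im := by nlinarith
  nlinarith [Real.pi_gt_three]

theorem exists_tsPsi_image_tsStrip_subset_cthickening {δ : ℝ} (hδ : 0 < δ) :
    ∃ d, 0 < d ∧ d < π / 2 ∧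
      tsPsi '' tsStrip d ⊆ Metric.cthickening δ ((↑) '' Set.Icc (-1 : ℝ) 1) := by
  -- For `|Re z| ≤ R` the imaginary part of `w = (π/2)·sinh z` is at most `2·cosh R·d ≤ δ/2`;
  -- for `|Re z| > R` its real part is at least `sinh R / 2 = 1/δ`.
  set R := Real.arsinh (2 / δ)
  set d := min 1 δ / (4 * Real.cosh R)
  have hd : 0 < d := by positivity
  have hd1 : d ≤ 1 := by
    rw [div_le_one (by positivity)]
    nlinarith [min_le_left 1 δ, Real.one_le_cosh R]
  refine ⟨d, hd, hd1.trans_lt (by linarith [Real.pi_gt_three]), ?_⟩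
  rintro _ ⟨z, hz, rfl⟩
  have hy : |z.im| < d := hz
  set w : ℂ := (π / 2 : ℂ) * Complex.sinh z
  refine Metric.mem_cthickening_of_dist_le _ (Real.tanh w.re : ℂ) _ _
    ⟨_, abs_le.1 (Real.abs_tanh_lt_one _).le, rfl⟩ ?_
  rw [Complex.dist_eq, ofReal_tanh]
  change ‖Complex.tanh w - _‖ ≤ δ
  rcases le_or_gt |z.re| R with hx | hx
  · have hv : |w.im| ≤ min 1 δ / 2 :=
      calc |w.im| ≤ 2 * Real.cosh R * |z.im| := abs_im_pi_div_two_mul_sinh_le hx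
        _ ≤ 2 * Real.cosh R * d := by gcongr
        _ = min 1 δ / 2 := by
            simp only [d]
            field_simp
            ring
    calc _ ≤ 2 * |w.im| := Complex.norm_tanh_sub_tanh_re_le_of_abs_im_le_one
          (hv.trans (by linarith [min_le_left 1 δ]))
      _ ≤ δ := by linarith [min_le_right 1 δ]
  · have hu : 1 / δ ≤ |w.re| := by
      have hsinh : 2 / δ ≤ Real.sinh |z.re| := by
        rw [← Real.sinh_arsinh (2 / δ)]
        exact Real.sinh_le_sinh.2 hx.le
      have : Real.sinh |z.re| / 2 ≤ |w.re| :=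
        sinh_abs_re_div_two_le_abs_re_pi_div_two_mul_sinh (hy.le.trans hd1)
      linarith [show 1 / δ = 2 / δ / 2 by ring]
    have hu0 : w.re ≠ 0 := abs_pos.1 ((by positivity : (0 : ℝ) < 1 / δ).trans_le hu)
    calc _ ≤ 1 / Real.sinh |w.re| := Complex.norm_tanh_sub_tanh_re_le_of_re_ne_zero hu0
      _ ≤ 1 / (1 / δ) := by
          gcongr
          exact hu.trans (Real.self_le_sinh_iff.2 (abs_nonneg _))
      _ = δ := one_div_one_div δ

theorem tanh_sinh_general_general (g h : ℂ → ℂ) (F : Finset ℂ)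
    (hg : AnalyticOn ℂ g ((↑F : Set ℂ)ᶜ))
    (hF : ∀ x ∈ F, x ∉ (fun t : ℝ => (t : ℂ)) '' Set.Icc (-1 : ℝ) 1)
    (C₁ : ℝ) (hC₁ : 0 < C₁)
    (hh : ∀ d₀ : ℝ, 0 < d₀ → d₀ < π / 2 → ∀ z ∈ tsPsi '' tsStrip d₀,
      C₁ * ‖(1 - z ^ 2) ^ (1 / 2 : ℂ)‖ ≤ ‖h z‖) :
    ∃ d : ℝ, 0 < d ∧ d < π / 2 ∧ ∃ C₂ : ℝ, 0 < C₂ ∧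
      AnalyticOn ℂ g (closure (tsPsi '' tsStrip d)) ∧
      (∀ z ∈ closure (tsPsi '' tsStrip d), ‖g z‖ ≤ C₂) ∧
      ∀ z ∈ tsPsi '' tsStrip d,
        ‖g z / h z‖ ≤ (C₂ / C₁) * ‖1 / (1 - z ^ 2) ^ (1 / 2 : ℂ)‖ := by
  have hI : IsCompact ((fun t : ℝ => (t : ℂ)) '' Set.Icc (-1 : ℝ) 1) :=
    isCompact_Icc.image continuous_ofReal
  obtain ⟨δ, hδ, hδF⟩ := hI.exists_cthickening_subset_open F.finite_toSet.isClosed.isOpen_compl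
    fun x hxI hxF => hF x hxF hxI
  obtain ⟨d, hd, hdπ, hψ⟩ := exists_tsPsi_image_tsStrip_subset_cthickening hδ
  have hcl := closure_minimal hψ Metric.isClosed_cthickening
  obtain ⟨C, hC⟩ := hI.cthickening.exists_bound_of_continuousOn (hg.mono hδF).continuousOn
  have hgC : ∀ z ∈ closure (tsPsi '' tsStrip d), ‖g z‖ ≤ max C 1 :=
    fun z hz => (hC z (hcl hz)).trans (le_max_left _ _)
  refine ⟨d, hd, hdπ, max C 1, by positivity, hg.mono (hcl.trans hδF), hgC, ?_⟩
  rintro _ ⟨z, hz, rfl⟩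
  have hroot : (1 - tsPsi z ^ 2) ^ (1 / 2 : ℂ) ≠ 0 :=
    fun h0 => Complex.one_sub_tanh_sq_ne_zero _ ((cpow_eq_zero_iff _ _).1 h0).1
  exact norm_div_le_div_mul_norm_one_div hC₁ (by positivity) hroot
    (hgC _ (subset_closure ⟨z, hz, rfl⟩)) (hh d hd hdπ _ ⟨z, hz, rfl⟩)

/-- Main general theorem: if `g` is analytic away from a finite singular set `F` disjoint from
`[−1, 1]`, and `h` satisfies `|h(z)| ≥ C₁·|√(1 − z²)|` on `ψ(D_{d₀})` for every
`d₀ ∈ (0, π/2)`, with `f = g/h` analytic where defined, then there exist `d ∈ (0, π/2)` and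
`C₂ > 0` such that `g` is analytic and bounded by `C₂` on the closure of `ψ(D_d)`, and
`|f(z)| ≤ (C₂/C₁)·|1/√(1 − z²)|` on `ψ(D_d)`. -/
theorem tanh_sinh_general (g h : ℂ → ℂ) (F : Finset ℂ)
    (hg : AnalyticOn ℂ g ((↑F : Set ℂ)ᶜ))
    (hF : ∀ x ∈ F, x ∉ (fun t : ℝ => (t : ℂ)) '' Set.Icc (-1 : ℝ) 1)
    (C₁ : ℝ) (hC₁ : 0 < C₁)
    (hh : ∀ d₀ : ℝ, 0 < d₀ → d₀ < π / 2 → ∀ z ∈ tsPsi '' tsStrip d₀,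
      C₁ * ‖(1 - z ^ 2) ^ (1 / 2 : ℂ)‖ ≤ ‖h z‖)
    (hf : AnalyticOn ℂ (fun z => g z / h z) {z : ℂ | z ∉ (↑F : Set ℂ) ∧ h z ≠ 0}) :
    ∃ d : ℝ, 0 < d ∧ d < π / 2 ∧ ∃ C₂ : ℝ, 0 < C₂ ∧
      AnalyticOn ℂ g (closure (tsPsi '' tsStrip d)) ∧
      (∀ z ∈ closure (tsPsi '' tsStrip d), ‖g z‖ ≤ C₂) ∧
      ∀ z ∈ tsPsi '' tsStrip d,
        ‖g z / h z‖ ≤ (C₂ / C₁) * ‖1 / (1 - z ^ 2) ^ (1 / 2 : ℂ)‖ :=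
  tanh_sinh_general_general g h F hg hF C₁ hC₁ hh
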